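/- Suppose in addition that singletons of S are measurable. If s₁, s₂ ∈ S satisfy φ(s₁) = φ(s₂), ξ({s₁}) > 0 and ξ({s₂}) > 0, then |V(s₁) − V(s₂)| ≤ (γ L_P/(1−γ)) · (ξ({s₁})⁻¹ + ξ({s₂})⁻¹). -/

import Mathlib

/-!
Put `W := V̄ ∘ φ` and `f := |V - W|`. Off the target the two Bellman equations subtract to
`f s ≤ γ (ε s + ∫ f d(P s))`, where `ε s` is the total variation distance between `φ∗P(·|s)` and
`P̄(φ s)`: since `0 ≤ V̄ ≤ 1`, the two expectations of `V̄` differ by at most `ε s`. Integrating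
against the invariant `ξ` gives `∫ f dξ ≤ γ L_P + γ ∫ f dξ`, so `∫ f dξ ≤ γ L_P / (1 - γ)`, and an
atom carries `ξ{s} f(s) ≤ ∫ f dξ`. Finally `W s₁ = W s₂` gives `|V s₁ - V s₂| ≤ f s₁ + f s₂`.
-/

open MeasureTheory ProbabilityTheory

noncomputable def tvDist {X : Type*} [MeasurableSpace X] (μ ν : Measure X) : ℝ :=
  ⨆ A : {A : Set X // MeasurableSet A}, |(μ A.1).toReal - (ν A.1).toReal|

section TotalVariation

variable {X : Type*} [MeasurableSpace X]

lemma tvDist_bddAbove (μ ν : Measure X) [IsFiniteMeasure μ] [IsFiniteMeasure ν] :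
    BddAbove (Set.range fun A : {A : Set X // MeasurableSet A} ↦ |μ.real A.1 - ν.real A.1|) := by
  refine ⟨μ.real Set.univ + ν.real Set.univ, ?_⟩
  rintro _ ⟨A, rfl⟩
  exact (abs_sub _ _).trans <| by
    rw [abs_of_nonneg measureReal_nonneg, abs_of_nonneg measureReal_nonneg]
    exact add_le_add (measureReal_mono (Set.subset_univ _)) (measureReal_mono (Set.subset_univ _))

lemma abs_measureReal_sub_le_tvDist (μ ν : Measure X) [IsFiniteMeasure μ] [IsFiniteMeasure ν]
    {A : Set X} (hA : MeasurableSet A) : |μ.real A - ν.real A| ≤ tvDist μ ν :=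
  le_ciSup (tvDist_bddAbove μ ν) ⟨A, hA⟩

lemma tvDist_nonneg (μ ν : Measure X) [IsFiniteMeasure μ] [IsFiniteMeasure ν] :
    0 ≤ tvDist μ ν :=
  (abs_nonneg _).trans (abs_measureReal_sub_le_tvDist μ ν .empty)

lemma tvDist_le_one (μ ν : Measure X) [IsProbabilityMeasure μ] [IsProbabilityMeasure ν] :
    tvDist μ ν ≤ 1 := by
  refine ciSup_le fun A ↦ ?_
  change |μ.real A.1 - ν.real A.1| ≤ 1
  refine abs_sub_le_iff.2 ⟨?_, ?_⟩ <;>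
    linarith [measureReal_nonneg (μ := μ) (s := A.1), measureReal_nonneg (μ := ν) (s := A.1),
      measureReal_le_one (μ := μ) (s := A.1), measureReal_le_one (μ := ν) (s := A.1)]

lemma tvDist_comm (μ ν : Measure X) : tvDist μ ν = tvDist ν μ := by
  simp only [tvDist, abs_sub_comm]

end TotalVariation

section FiniteTotalVariation

variable {X : Type*} [Fintype X] [MeasurableSpace X] [DiscreteMeasurableSpace X]

lemma integral_sub_integral_le_tvDist (μ ν : Measure X) [IsFiniteMeasure μ] [IsFiniteMeasure ν]
    {g : X → ℝ} (hg0 : ∀ x, 0 ≤ g x) (hg1 : ∀ x, g x ≤ 1) :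
    ∫ x, g x ∂μ - ∫ x, g x ∂ν ≤ tvDist μ ν := by
  classical
  set A := Finset.univ.filter fun x ↦ ν.real {x} ≤ μ.real {x}
  calc ∫ x, g x ∂μ - ∫ x, g x ∂ν = ∑ x, (μ.real {x} - ν.real {x}) * g x := by
        simp only [integral_fintype Integrable.of_finite, smul_eq_mul, ← Finset.sum_sub_distrib,
          sub_mul]
    _ ≤ ∑ x ∈ A, (μ.real {x} - ν.real {x}) := by
        rw [Finset.sum_filter]
        refine Finset.sum_le_sum fun x _ ↦ ?_
        split_ifs with hx
        · nlinarith [hg1 x]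
        · nlinarith [hg0 x]
    _ = μ.real A - ν.real A := by
        rw [Finset.sum_sub_distrib, sum_measureReal_singleton, sum_measureReal_singleton]
    _ ≤ tvDist μ ν := (le_abs_self _).trans (abs_measureReal_sub_le_tvDist μ ν .of_discrete)

lemma abs_integral_sub_integral_le_tvDist (μ ν : Measure X) [IsFiniteMeasure μ]
    [IsFiniteMeasure ν] {g : X → ℝ} (hg0 : ∀ x, 0 ≤ g x) (hg1 : ∀ x, g x ≤ 1) :
    |∫ x, g x ∂μ - ∫ x, g x ∂ν| ≤ tvDist μ ν := by
  refine abs_sub_le_iff.2 ⟨integral_sub_integral_le_tvDist μ ν hg0 hg1, ?_⟩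
  rw [tvDist_comm]
  exact integral_sub_integral_le_tvDist ν μ hg0 hg1

end FiniteTotalVariation

namespace ProbabilityTheory.Kernel.Invariant

variable {α : Type*} [MeasurableSpace α] {κ : Kernel α α} {μ : Measure α} {f : α → ℝ}

lemma of_forall_measure_eq_lintegral (h : ∀ A, MeasurableSet A → μ A = ∫⁻ x, κ x A ∂μ) :
    κ.Invariant μ :=
  Measure.ext fun A hA ↦ by rw [Measure.bind_apply hA κ.aemeasurable, h A hA]

lemma integral_integral [IsSFiniteKernel κ] [SFinite μ] (hκ : κ.Invariant μ)
    (hf : Integrable f μ) : ∫ x, ∫ y, f y ∂κ x ∂μ = ∫ x, f x ∂μ := by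
  rw [← hκ.def] at hf
  conv_rhs => rw [← hκ.def, ← Measure.snd_compProd, Measure.snd]
  have hf_snd : AEStronglyMeasurable f (μ ⊗ₘ κ).snd := by rw [Measure.snd_compProd]; exact hf.1
  rw [integral_map measurable_snd.aemeasurable hf_snd,
    Measure.integral_compProd ((Measure.integrable_compProd_snd_iff hf.1).2 hf)]

lemma integrable_integral (hκ : κ.Invariant μ) (hf0 : 0 ≤ f) (hf : Integrable f μ) :
    Integrable (fun x ↦ ∫ y, f y ∂κ x) μ := by
  rw [← hκ.def] at hf
  simpa [Real.norm_of_nonneg (hf0 _)] using Measure.integrable_integral_norm_of_integrable_comp hf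

lemma integral_le_div_of_le_discounted [IsSFiniteKernel κ] [SFinite μ] (hκ : κ.Invariant μ)
    {ε : α → ℝ} {γ : ℝ} (hγ : γ < 1) (hf0 : 0 ≤ f) (hf : Integrable f μ) (hε : Integrable ε μ)
    (h : ∀ᵐ x ∂μ, f x ≤ γ * (ε x + ∫ y, f y ∂κ x)) :
    ∫ x, f x ∂μ ≤ γ * (∫ x, ε x ∂μ) / (1 - γ) := by
  have hPf := hκ.integrable_integral hf0 hf
  have : ∫ x, f x ∂μ ≤ γ * (∫ x, ε x ∂μ + ∫ x, f x ∂μ) := calc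
    ∫ x, f x ∂μ ≤ ∫ x, γ * (ε x + ∫ y, f y ∂κ x) ∂μ :=
      integral_mono_ae hf ((hε.add hPf).const_mul γ) h
    _ = γ * (∫ x, ε x ∂μ + ∫ x, f x ∂μ) := by
      rw [integral_const_mul, integral_add hε hPf, hκ.integral_integral hf]
  rw [le_div_iff₀ (sub_pos.2 hγ)]
  linarith

end ProbabilityTheory.Kernel.Invariant

lemma le_integral_mul_inv_measureReal_singleton {α : Type*} [MeasurableSpace α] {μ : Measure α}
    [IsFiniteMeasure μ] {f : α → ℝ} (hf0 : 0 ≤ f) (hfm : StronglyMeasurable f)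
    (hf : Integrable f μ) {a : α} (ha : 0 < μ {a}) :
    f a ≤ (∫ x, f x ∂μ) * (μ.real {a})⁻¹ := by
  have ha' : 0 < μ.real {a} := ENNReal.toReal_pos ha.ne' (measure_ne_top μ {a})
  rw [le_mul_inv_iff₀ ha', mul_comm]
  have := setIntegral_le_integral (s := {a}) hf (ae_of_all _ hf0)
  rwa [integral_singleton' hfm, smul_eq_mul] at this

section Abstraction

variable {S Sb : Type*} [MeasurableSpace S] [MeasurableSpace Sb]
  (P : Kernel S S) (Pb : Sb → PMF Sb) (φ : S → Sb)

noncomputable def transitionLoss (s : S) : ℝ :=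
  tvDist ((P s).map φ) (Pb (φ s)).toMeasure

variable {P Pb φ}

lemma transitionLoss_nonneg [IsFiniteKernel P] (s : S) : 0 ≤ transitionLoss P Pb φ s :=
  tvDist_nonneg _ _

lemma transitionLoss_le_one [IsMarkovKernel P] (hφ : Measurable φ) (s : S) :
    transitionLoss P Pb φ s ≤ 1 :=
  have := Measure.isProbabilityMeasure_map (μ := P s) hφ.aemeasurable
  tvDist_le_one _ _

lemma measurable_transitionLoss [Finite Sb] [DiscreteMeasurableSpace Sb] (hφ : Measurable φ) :
    Measurable (transitionLoss P Pb φ) := by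
  refine Measurable.iSup fun A ↦ ?_
  simp_rw [Measure.map_apply hφ A.2]
  exact ((P.measurable_coe (hφ A.2)).ennreal_toReal.sub
    ((Measurable.of_discrete (f := fun x ↦ ((Pb x).toMeasure A.1).toReal)).comp hφ)).abs

lemma integrable_transitionLoss [Finite Sb] [DiscreteMeasurableSpace Sb] [IsMarkovKernel P]
    (hφ : Measurable φ) (μ : Measure S) [IsFiniteMeasure μ] :
    Integrable (transitionLoss P Pb φ) μ :=
  .of_bound (measurable_transitionLoss hφ).aestronglyMeasurable 1 <| ae_of_all _ fun s ↦ by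
    rw [Real.norm_of_nonneg (transitionLoss_nonneg s)]
    exact transitionLoss_le_one hφ s

lemma abs_sub_comp_le_transitionLoss_add [Fintype Sb] [DiscreteMeasurableSpace Sb]
    [IsFiniteKernel P] (hφ : Measurable φ) {V : S → ℝ} {Vb : Sb → ℝ}
    (hVb0 : ∀ x, 0 ≤ Vb x) (hVb1 : ∀ x, Vb x ≤ 1) {γ : ℝ} (hγ : 0 ≤ γ) {s : S}
    (hV : Integrable V (P s)) (hVs : V s = γ * ∫ s', V s' ∂P s)
    (hVbs : Vb (φ s) = γ * ∑ y, (Pb (φ s) y).toReal * Vb y) :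
    |V s - Vb (φ s)| ≤ γ * (transitionLoss P Pb φ s + ∫ s', |V s' - Vb (φ s')| ∂P s) := by
  have hVbφ : Integrable (fun s' ↦ Vb (φ s')) (P s) :=
    .of_bound (Measurable.of_discrete.comp hφ).aestronglyMeasurable 1 <| ae_of_all _ fun s' ↦
      abs_le.2 ⟨by linarith [hVb0 (φ s')], hVb1 (φ s')⟩
  have hmap : ∫ s', Vb (φ s') ∂P s = ∫ y, Vb y ∂(P s).map φ :=
    (integral_map hφ.aemeasurable Measurable.of_discrete.aestronglyMeasurable).symm
  have hPb : ∑ y, (Pb (φ s) y).toReal * Vb y = ∫ y, Vb y ∂(Pb (φ s)).toMeasure := by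
    simp only [PMF.integral_eq_sum, smul_eq_mul]
  rw [hVs, hVbs, hPb, ← mul_sub, abs_mul, abs_of_nonneg hγ]
  gcongr
  calc |∫ s', V s' ∂P s - ∫ y, Vb y ∂(Pb (φ s)).toMeasure|
      ≤ |∫ s', V s' ∂P s - ∫ s', Vb (φ s') ∂P s|
        + |∫ y, Vb y ∂(P s).map φ - ∫ y, Vb y ∂(Pb (φ s)).toMeasure| := by
        rw [← hmap]; exact abs_sub_le _ _ _
    _ ≤ ∫ s', |V s' - Vb (φ s')| ∂P s + transitionLoss P Pb φ s := by
        gcongr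
        · rw [← integral_sub hV hVbφ]; exact abs_integral_le_integral_abs
        · exact abs_integral_sub_integral_le_tvDist _ _ hVb0 hVb1
    _ = _ := add_comm _ _

end Abstraction

theorem value_closeness_reachability_general
    {S : Type*} [MeasurableSpace S]
    {Sb : Type*} [Fintype Sb] [MeasurableSpace Sb] [DiscreteMeasurableSpace Sb]
    (P : Kernel S S) [IsMarkovKernel P]
    (Pb : Sb → PMF Sb)
    (φ : S → Sb) (hφ : Measurable φ)
    (ξ : Measure S) [IsProbabilityMeasure ξ]
    (hinv : ∀ A : Set S, MeasurableSet A → ξ A = ∫⁻ s, P s A ∂ξ)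
    (γ : ℝ) (hγ0 : 0 ≤ γ) (hγ1 : γ < 1)
    (Bb : Set Sb)
    (V : S → ℝ) (hVmeas : Measurable V)
    (hV0 : ∀ s, 0 ≤ V s) (hV1 : ∀ s, V s ≤ 1)
    (hVtarget : ∀ s, φ s ∈ Bb → V s = 1)
    (hVbellman : ∀ s, φ s ∉ Bb → V s = γ * ∫ s', V s' ∂(P s))
    (Vb : Sb → ℝ) (hVb0 : ∀ x, 0 ≤ Vb x) (hVb1 : ∀ x, Vb x ≤ 1)
    (hVbtarget : ∀ x ∈ Bb, Vb x = 1)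
    (hVbbellman : ∀ x, x ∉ Bb → Vb x = γ * ∑ y, ((Pb x) y).toReal * Vb y)
    (s₁ s₂ : S) (hφeq : φ s₁ = φ s₂)
    (hs₁ : 0 < ξ {s₁}) (hs₂ : 0 < ξ {s₂}) :
    |V s₁ - V s₂| ≤
      (γ * (∫ s, tvDist ((P s).map φ) ((Pb (φ s)).toMeasure) ∂ξ) / (1 - γ)) *
        ((ξ {s₁}).toReal⁻¹ + (ξ {s₂}).toReal⁻¹) := by
  set f : S → ℝ := fun s ↦ |V s - Vb (φ s)|
  have hf_meas : Measurable f := (hVmeas.sub (Measurable.of_discrete.comp hφ)).abs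
  have hf_int : Integrable f ξ := .of_bound hf_meas.aestronglyMeasurable 1 <| ae_of_all _ fun s ↦ by
    rw [Real.norm_eq_abs, abs_abs]
    exact abs_sub_le_of_nonneg_of_le (hV0 s) (hV1 s) (hVb0 _) (hVb1 _)
  have hV_int : ∀ (μ : Measure S) [IsFiniteMeasure μ], Integrable V μ := fun μ _ ↦
    .of_bound hVmeas.aestronglyMeasurable 1 <| ae_of_all _ fun s ↦
      abs_le.2 ⟨by linarith [hV0 s], hV1 s⟩
  have hf_step : ∀ s, f s ≤ γ * (transitionLoss P Pb φ s + ∫ s', f s' ∂P s) := by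
    intro s
    by_cases hs : φ s ∈ Bb
    · rw [show f s = 0 by simp [f, hVtarget s hs, hVbtarget _ hs]]
      exact mul_nonneg hγ0
        (add_nonneg (transitionLoss_nonneg s) (integral_nonneg fun _ ↦ abs_nonneg _))
    · exact abs_sub_comp_le_transitionLoss_add hφ hVb0 hVb1 hγ0 (hV_int _) (hVbellman s hs)
        (hVbbellman _ hs)
  have hD := (Kernel.Invariant.of_forall_measure_eq_lintegral hinv).integral_le_div_of_le_discounted
    hγ1 (fun s ↦ abs_nonneg _) hf_int (integrable_transitionLoss hφ ξ) (ae_of_all _ hf_step)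
  have hatom : ∀ {s}, 0 < ξ {s} → f s ≤ (∫ s, f s ∂ξ) * (ξ {s}).toReal⁻¹ :=
    le_integral_mul_inv_measureReal_singleton (fun s ↦ abs_nonneg _) hf_meas.stronglyMeasurable
      hf_int
  calc |V s₁ - V s₂| ≤ f s₁ + f s₂ := by
        simpa only [f, hφeq, abs_sub_comm (Vb _)] using abs_sub_le (V s₁) (Vb (φ s₁)) (V s₂)
    _ ≤ (∫ s, f s ∂ξ) * ((ξ {s₁}).toReal⁻¹ + (ξ {s₂}).toReal⁻¹) := by
        rw [mul_add]; exact add_le_add (hatom hs₁) (hatom hs₂)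
    _ ≤ _ := by gcongr; exact hD

/-- Abstraction-quality bound for discounted reachability: two states with the same embedding
and positive stationary mass have reachability values within
`(γ·L_P/(1-γ))·(ξ{s₁}⁻¹ + ξ{s₂}⁻¹)` of each other. -/
theorem value_closeness_reachability
    {S : Type*} [MeasurableSpace S] [MeasurableSingletonClass S]
    {Sb : Type*} [Fintype Sb] [Nonempty Sb] [MeasurableSpace Sb] [DiscreteMeasurableSpace Sb]
    (P : Kernel S S) [IsMarkovKernel P]
    (Pb : Sb → PMF Sb)
    (φ : S → Sb) (hφ : Measurable φ)
    (ξ : Measure S) [IsProbabilityMeasure ξ]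
    (hinv : ∀ A : Set S, MeasurableSet A → ξ A = ∫⁻ s, P s A ∂ξ)
    (γ : ℝ) (hγ0 : 0 ≤ γ) (hγ1 : γ < 1)
    (Bb : Set Sb)
    (V : S → ℝ) (hVmeas : Measurable V)
    (hV0 : ∀ s, 0 ≤ V s) (hV1 : ∀ s, V s ≤ 1)
    (hVtarget : ∀ s, φ s ∈ Bb → V s = 1)
    (hVbellman : ∀ s, φ s ∉ Bb → V s = γ * ∫ s', V s' ∂(P s))
    (Vb : Sb → ℝ) (hVb0 : ∀ x, 0 ≤ Vb x) (hVb1 : ∀ x, Vb x ≤ 1)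
    (hVbtarget : ∀ x ∈ Bb, Vb x = 1)
    (hVbbellman : ∀ x, x ∉ Bb → Vb x = γ * ∑ y, ((Pb x) y).toReal * Vb y)
    (s₁ s₂ : S) (hφeq : φ s₁ = φ s₂)
    (hs₁ : 0 < ξ {s₁}) (hs₂ : 0 < ξ {s₂}) :
    |V s₁ - V s₂| ≤
      (γ * (∫ s, tvDist ((P s).map φ) ((Pb (φ s)).toMeasure) ∂ξ) / (1 - γ)) *
        ((ξ {s₁}).toReal⁻¹ + (ξ {s₂}).toReal⁻¹) :=
  value_closeness_reachability_general P Pb φ hφ ξ hinv γ hγ0 hγ1 Bb V hVmeas hV0 hV1 hVtarget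
    hVbellman Vb hVb0 hVb1 hVbtarget hVbbellman s₁ s₂ hφeq hs₁ hs₂
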